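/- arXiv:2605.14310 — 3 statements merged into one kernel-verified Lean document; each statement's English description precedes it below -/
import Mathlib

section
/- Combining the previous results: for softmax-type weights a_i(q) ≥ 0 with Σ_i a_i(q) = 1, the attention-output approximation error || Σ_i a_i(q) v_i − Σ_{j in S} w_j(q) v_j || with cluster weights w_j(q) = Σ_{i: j*(i)=j} a_i(q) is bounded by sqrt( (1/(1−α)) Σ_i a_i(q) · d_α(i,S) ), where d_α is the bicriteria distance and j* assigns each i to its nearest representative in S under d_α. -/
open Finset

/-- attention-output approximation error with cluster weights assigned by
the bicriteria nearest representative is bounded by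
sqrt( (1/(1-α)) Σ_i a_i d_α(i,S) ). -/
theorem stmt3 {N dk dv : ℕ} (a : Fin N → ℝ) (ha : ∀ i, 0 ≤ a i) (hsum : ∑ i, a i = 1)
    (k : Fin N → EuclideanSpace ℝ (Fin dk)) (v : Fin N → EuclideanSpace ℝ (Fin dv))
    (S : Finset (Fin N)) (hS : S.Nonempty) (α : ℝ) (hα0 : 0 ≤ α) (hα1 : α < 1)
    (jstar : Fin N → Fin N) (hmem : ∀ i, jstar i ∈ S)
    (hmin : ∀ i, ∀ j ∈ S,
      α * ‖k i - k (jstar i)‖ ^ 2 + (1 - α) * ‖v i - v (jstar i)‖ ^ 2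
        ≤ α * ‖k i - k j‖ ^ 2 + (1 - α) * ‖v i - v j‖ ^ 2) :
    ‖(∑ i, a i • v i) -
        ∑ j ∈ S, (∑ i ∈ Finset.univ.filter (fun i => jstar i = j), a i) • v j‖
      ≤ Real.sqrt ((1 / (1 - α)) *
          ∑ i, a i * S.inf' hS (fun j => α * ‖k i - k j‖ ^ 2 + (1 - α) * ‖v i - v j‖ ^ 2)) := by
  have h1α : (0:ℝ) < 1 - α := by linarith
  set D : Fin N → ℝ := fun i =>
    S.inf' hS (fun j => α * ‖k i - k j‖ ^ 2 + (1 - α) * ‖v i - v j‖ ^ 2) with hD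
  set e : Fin N → EuclideanSpace ℝ (Fin dv) := fun i => v i - v (jstar i) with he
  -- rewrite clustered sum
  have hcl : (∑ j ∈ S, (∑ i ∈ Finset.univ.filter (fun i => jstar i = j), a i) • v j)
      = ∑ i, a i • v (jstar i) := by
    rw [← Finset.sum_fiberwise_of_maps_to (fun i _ => hmem i) (fun i => a i • v (jstar i))]
    refine Finset.sum_congr rfl fun j hj => ?_
    rw [Finset.sum_smul]
    refine Finset.sum_congr rfl fun i hi => ?_
    rw [Finset.mem_filter] at hi
    rw [hi.2]
  have hdiff : (∑ i, a i • v i) -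
      (∑ j ∈ S, (∑ i ∈ Finset.univ.filter (fun i => jstar i = j), a i) • v j)
      = ∑ i, a i • e i := by
    rw [hcl, ← Finset.sum_sub_distrib]
    exact Finset.sum_congr rfl fun i _ => (smul_sub (a i) (v i) (v (jstar i))).symm
  rw [hdiff]
  -- pointwise bound: (1-α)‖e i‖² ≤ D i
  have hB : ∀ i, (1 - α) * ‖e i‖ ^ 2 ≤ D i := by
    intro i
    have h1 : (1 - α) * ‖e i‖ ^ 2
        ≤ α * ‖k i - k (jstar i)‖ ^ 2 + (1 - α) * ‖v i - v (jstar i)‖ ^ 2 := by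
      have := sq_nonneg ‖k i - k (jstar i)‖
      simp only [he]
      nlinarith
    exact h1.trans (Finset.le_inf' hS _ fun j hj => hmin i j hj)
  have hDnonneg : ∀ i, 0 ≤ D i := fun i => le_trans (by positivity) (hB i)
  -- step 1: triangle inequality
  have step1 : ‖∑ i, a i • e i‖ ≤ ∑ i, a i * ‖e i‖ := by
    refine (norm_sum_le _ _).trans (le_of_eq ?_)
    exact Finset.sum_congr rfl fun i _ => by rw [norm_smul, Real.norm_eq_abs, abs_of_nonneg (ha i)]
  -- step 2: Cauchy-Schwarz
  have step2 : ∑ i, a i * ‖e i‖ ≤ Real.sqrt (∑ i, a i * ‖e i‖ ^ 2) := by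
    have hcs := Finset.sum_mul_sq_le_sq_mul_sq (Finset.univ : Finset (Fin N))
      (fun i => Real.sqrt (a i)) (fun i => Real.sqrt (a i) * ‖e i‖)
    have h1 : ∀ i : Fin N, Real.sqrt (a i) * (Real.sqrt (a i) * ‖e i‖) = a i * ‖e i‖ := by
      intro i; rw [← mul_assoc, Real.mul_self_sqrt (ha i)]
    have h2 : ∀ i : Fin N, Real.sqrt (a i) ^ 2 = a i := fun i => Real.sq_sqrt (ha i)
    have h3 : ∀ i : Fin N, (Real.sqrt (a i) * ‖e i‖) ^ 2 = a i * ‖e i‖ ^ 2 := by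
      intro i; rw [mul_pow, h2]
    simp only [h1, h2, h3] at hcs
    rw [hsum, one_mul] at hcs
    have hnn : 0 ≤ ∑ i, a i * ‖e i‖ :=
      Finset.sum_nonneg fun i _ => mul_nonneg (ha i) (norm_nonneg _)
    have hq : 0 ≤ ∑ i, a i * ‖e i‖ ^ 2 :=
      Finset.sum_nonneg fun i _ => mul_nonneg (ha i) (sq_nonneg _)
    nlinarith [Real.sq_sqrt hq, Real.sqrt_nonneg (∑ i, a i * ‖e i‖ ^ 2)]
  -- step 3
  have step3 : ∑ i, a i * ‖e i‖ ^ 2 ≤ (1 / (1 - α)) * ∑ i, a i * D i := by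
    rw [Finset.mul_sum]
    refine Finset.sum_le_sum fun i _ => ?_
    have := mul_le_mul_of_nonneg_left (hB i) (ha i)
    rw [div_mul_eq_mul_div, one_mul, le_div_iff₀ h1α]
    nlinarith
  calc ‖∑ i, a i • e i‖ ≤ ∑ i, a i * ‖e i‖ := step1
    _ ≤ Real.sqrt (∑ i, a i * ‖e i‖ ^ 2) := step2
    _ ≤ Real.sqrt ((1 / (1 - α)) * ∑ i, a i * D i) := Real.sqrt_le_sqrt step3
end

section
/- The set function F(S) = log det( ε I_d + Σ_{j∈S} k_j k_j^T ) on subsets of {1,...,N}, with ε > 0 and k_j ∈ R^d, is submodular: for all A ⊆ B and i ∉ B, F(A ∪ {i}) − F(A) ≥ F(B ∪ {i}) − F(B). -/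
/-!
By the matrix determinant lemma, `F (insert i S) - F S = log (1 + kᵢᵀ M_S⁻¹ kᵢ)` where
`M_S = ε I + ∑_{j ∈ S} kⱼ kⱼᵀ`. For `A ⊆ B` we have `M_A ≤ M_B` in the Loewner order, so it
suffices that `u ↦ uᵀ M⁻¹ u` is antitone in the positive definite matrix `M`. This follows from
the variational formula `uᵀ M⁻¹ u = max_x (2 xᵀ u - xᵀ M x)`, the maximum being attained at
`x = M⁻¹ u`.
-/

open Matrix
open scoped MatrixOrder

namespace Matrix

variable {n : Type*} [Fintype n]

theorem IsHermitian.dotProduct_mulVec_comm {M : Matrix n n ℝ} (hM : M.IsHermitian)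
    (x y : n → ℝ) : x ⬝ᵥ M *ᵥ y = y ⬝ᵥ M *ᵥ x := by
  have hMt : Mᵀ = M := by simpa [conjTranspose_eq_transpose_of_trivial] using hM.eq
  rw [dotProduct_mulVec, ← mulVec_transpose, hMt, dotProduct_comm]

variable [DecidableEq n]

theorem det_add_vecMulVec {R : Type*} [CommRing R] {M : Matrix n n R} (hM : IsUnit M.det)
    (u v : n → R) : (M + vecMulVec u v).det = M.det * (1 + v ⬝ᵥ M⁻¹ *ᵥ u) := by
  rw [vecMulVec_eq Unit, det_add_replicateCol_mul_replicateRow hM,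
    det_unique (1 + _ : Matrix Unit Unit R), add_apply, one_apply_eq, Matrix.mul_assoc,
    ← replicateCol_mulVec, replicateRow_mul_replicateCol_apply]

theorem PosDef.two_mul_dotProduct_sub_le {M : Matrix n n ℝ} (hM : M.PosDef) (u x : n → ℝ) :
    2 * (x ⬝ᵥ u) - x ⬝ᵥ M *ᵥ x ≤ u ⬝ᵥ M⁻¹ *ᵥ u := by
  set a := M⁻¹ *ᵥ u
  have hMa : M *ᵥ a = u := by
    rw [mulVec_mulVec, mul_nonsing_inv _ hM.det_pos.ne'.isUnit, one_mulVec]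
  -- the gap is `(x - a)ᵀ M (x - a)`
  have hgap := hM.posSemidef.dotProduct_mulVec_nonneg (x - a)
  rw [star_trivial, mulVec_sub, dotProduct_sub, sub_dotProduct, sub_dotProduct, hMa,
    hM.isHermitian.dotProduct_mulVec_comm a x, hMa, dotProduct_comm a u] at hgap
  linarith

theorem PosDef.dotProduct_inv_mulVec_le_of_le {M M' : Matrix n n ℝ} (hM : M.PosDef)
    (hMM' : M ≤ M') (u : n → ℝ) : u ⬝ᵥ M'⁻¹ *ᵥ u ≤ u ⬝ᵥ M⁻¹ *ᵥ u := by
  have hM' : M'.PosDef := by simpa using hM.add_posSemidef hMM'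
  set a := M'⁻¹ *ᵥ u
  have hMa : M' *ᵥ a = u := by
    rw [mulVec_mulVec, mul_nonsing_inv _ hM'.det_pos.ne'.isUnit, one_mulVec]
  have hgap := hMM'.dotProduct_mulVec_nonneg a
  rw [star_trivial, sub_mulVec, dotProduct_sub, hMa] at hgap
  have hvar := hM.two_mul_dotProduct_sub_le u a
  rw [dotProduct_comm a u] at hvar hgap
  linarith

theorem PosDef.log_det_add_vecMulVec_self {M : Matrix n n ℝ} (hM : M.PosDef) (u : n → ℝ) :
    Real.log (M + vecMulVec u u).det = Real.log M.det + Real.log (1 + u ⬝ᵥ M⁻¹ *ᵥ u) := by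
  have hquad : 0 ≤ u ⬝ᵥ M⁻¹ *ᵥ u := by
    simpa using hM.inv.posSemidef.dotProduct_mulVec_nonneg u
  rw [det_add_vecMulVec hM.det_pos.ne'.isUnit, Real.log_mul hM.det_pos.ne' (by positivity)]

theorem PosDef.log_det_add_vecMulVec_self_sub_le_of_le {M M' : Matrix n n ℝ} (hM : M.PosDef)
    (hMM' : M ≤ M') (u : n → ℝ) :
    Real.log (M' + vecMulVec u u).det - Real.log M'.det ≤
      Real.log (M + vecMulVec u u).det - Real.log M.det := by
  have hM' : M'.PosDef := by simpa using hM.add_posSemidef hMM'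
  have hquad : 0 ≤ u ⬝ᵥ M'⁻¹ *ᵥ u := by
    simpa using hM'.inv.posSemidef.dotProduct_mulVec_nonneg u
  rw [hM.log_det_add_vecMulVec_self, hM'.log_det_add_vecMulVec_self, add_sub_cancel_left,
    add_sub_cancel_left]
  exact Real.log_le_log (by positivity)
    (by linarith [hM.dotProduct_inv_mulVec_le_of_le hMM' u])

end Matrix

/-- submodularity of F(S) = log det(ε I_d + Σ_{j∈S} k_j k_jᵀ). -/
theorem stmt9 {N d : ℕ} (ε : ℝ) (hε : 0 < ε) (k : Fin N → Fin d → ℝ)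
    (F : Finset (Fin N) → ℝ)
    (hF : ∀ S, F S = Real.log (ε • (1 : Matrix (Fin d) (Fin d) ℝ) +
        ∑ j ∈ S, Matrix.vecMulVec (k j) (k j)).det)
    (A B : Finset (Fin N)) (hAB : A ⊆ B) (i : Fin N) (hi : i ∉ B) :
    F (insert i B) - F B ≤ F (insert i A) - F A := by
  set G : Finset (Fin N) → Matrix (Fin d) (Fin d) ℝ :=
    fun S => ε • 1 + ∑ j ∈ S, vecMulVec (k j) (k j)
  have hFG : ∀ S, F S = Real.log (G S).det := hF
  have hterm : ∀ j, 0 ≤ vecMulVec (k j) (k j) := fun j => by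
    simpa [nonneg_iff_posSemidef] using posSemidef_vecMulVec_self_star (k j)
  have hGA : (G A).PosDef := (PosDef.one.smul hε).add_posSemidef
    (nonneg_iff_posSemidef.mp (Finset.sum_nonneg fun j _ => hterm j))
  have hGAB : G A ≤ G B :=
    add_le_add_right (Finset.sum_le_sum_of_subset_of_nonneg hAB fun j _ _ => hterm j) _
  have hG_insert : ∀ S, i ∉ S → G (insert i S) = G S + vecMulVec (k i) (k i) := fun S hiS => by
    simp only [G, Finset.sum_insert hiS]
    abel
  rw [hFG, hFG, hFG, hFG, hG_insert B hi, hG_insert A (fun h => hi (hAB h))]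
  exact hGA.log_det_add_vecMulVec_self_sub_le_of_le hGAB (k i)
end

section
/- Let F be a monotone submodular set function on subsets of a finite ground set with F(∅) = 0, and let b ≥ 1. The greedy algorithm that at each step adds an element of maximal marginal gain produces, after b steps, a set S_b satisfying F(S_b) ≥ (1 − (1 − 1/b)^b) · max_{|S| ≤ b} F(S) ≥ (1 − e^{-1}) · max_{|S| ≤ b} F(S). -/
open Finset

lemma stmt11_aux {Ω : Type*} [DecidableEq Ω] (F : Finset Ω → ℝ)
    (hmono : ∀ A B : Finset Ω, A ⊆ B → F A ≤ F B)
    (hsub : ∀ A B : Finset Ω, A ⊆ B → ∀ i ∉ B,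
      F (insert i B) - F B ≤ F (insert i A) - F A) :
    ∀ (B A : Finset Ω), F (A ∪ B) - F A ≤ ∑ j ∈ B \ A, (F (insert j A) - F A) := by
  intro B
  induction B using Finset.induction_on with
  | empty => intro A; simp
  | @insert i B hiB ih =>
    intro A
    by_cases hiA : i ∈ A
    · have h1 : A ∪ insert i B = A ∪ B := by
        ext x; simp only [mem_union, mem_insert]
        constructor
        · rintro (h | rfl | h) <;> simp_all
        · rintro (h | h) <;> simp_all
      have h2 : insert i B \ A = B \ A := by
        ext x; simp only [mem_sdiff, mem_insert]
        constructor
        · rintro ⟨rfl | h, hx⟩ <;> simp_all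
        · rintro ⟨h, hx⟩; exact ⟨Or.inr h, hx⟩
      rw [h1, h2]; exact ih A
    · have h1 : A ∪ insert i B = insert i (A ∪ B) := Finset.union_insert i A B
      have h2 : insert i B \ A = insert i (B \ A) := by
        ext x
        simp only [mem_sdiff, mem_insert]
        constructor
        · rintro ⟨rfl | h, hx⟩
          · exact Or.inl rfl
          · exact Or.inr ⟨h, hx⟩
        · rintro (rfl | ⟨h, hx⟩)
          · exact ⟨Or.inl rfl, hiA⟩
          · exact ⟨Or.inr h, hx⟩
      have hiAB : i ∉ A ∪ B := by simp [hiA, hiB]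
      rw [h1, h2, Finset.sum_insert (by simp [hiB])]
      have key : F (insert i (A ∪ B)) - F (A ∪ B) ≤ F (insert i A) - F A :=
        hsub A (A ∪ B) Finset.subset_union_left i hiAB
      have := ih A
      linarith

/-- Nemhauser–Wolsey–Fisher guarantee: greedy maximization of a monotone
submodular set function with F(∅)=0 achieves a (1 − (1 − 1/b)^b) ≥ (1 − e⁻¹) fraction of
the optimum over sets of size at most b. -/
theorem stmt11 {Ω : Type*} [Fintype Ω] [DecidableEq Ω] (F : Finset Ω → ℝ)
    (h0 : F ∅ = 0)
    (hmono : ∀ A B : Finset Ω, A ⊆ B → F A ≤ F B)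
    (hsub : ∀ A B : Finset Ω, A ⊆ B → ∀ i ∉ B,
      F (insert i B) - F B ≤ F (insert i A) - F A)
    (b : ℕ) (hb : 1 ≤ b) (S : ℕ → Finset Ω) (hS0 : S 0 = ∅)
    (hgreedy : ∀ t < b, ∃ i ∉ S t, S (t + 1) = insert i (S t) ∧
      ∀ j ∉ S t, F (insert j (S t)) - F (S t) ≤ F (insert i (S t)) - F (S t))
    (T : Finset Ω) (hT : T.card ≤ b) :
    (1 - (1 - 1 / (b : ℝ)) ^ b) * F T ≤ F (S b) ∧
      (1 - Real.exp (-1)) * F T ≤ F (S b) := by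
  have hbpos : (0:ℝ) < b := by exact_mod_cast hb
  have hFT : 0 ≤ F T := by rw [← h0]; exact hmono ∅ T (Finset.empty_subset T)
  -- per-step inequality
  have step : ∀ t < b, F T - F (S t) ≤ (b : ℝ) * (F (S (t+1)) - F (S t)) := by
    intro t ht
    obtain ⟨i, hi, hSt1, hmax⟩ := hgreedy t ht
    set Δ : ℝ := F (S (t+1)) - F (S t) with hΔ
    have hΔ0 : 0 ≤ Δ := by
      rw [hΔ, hSt1]; have := hmono (S t) (insert i (S t)) (Finset.subset_insert _ _); linarith
    have h1 : F T ≤ F (S t ∪ T) := hmono T _ Finset.subset_union_right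
    have h2 : F (S t ∪ T) - F (S t) ≤ ∑ j ∈ T \ S t, (F (insert j (S t)) - F (S t)) :=
      stmt11_aux F hmono hsub T (S t)
    have h3 : ∑ j ∈ T \ S t, (F (insert j (S t)) - F (S t)) ≤ (T \ S t).card • Δ := by
      apply Finset.sum_le_card_nsmul
      intro j hj
      rw [hΔ, hSt1]
      exact hmax j (Finset.mem_sdiff.mp hj).2
    have hcard : ((T \ S t).card : ℝ) ≤ (b : ℝ) := by
      have : (T \ S t).card ≤ T.card := Finset.card_le_card (Finset.sdiff_subset)
      exact_mod_cast le_trans this hT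
    have h4 : ((T \ S t).card : ℝ) * Δ ≤ (b : ℝ) * Δ :=
      mul_le_mul_of_nonneg_right hcard hΔ0
    rw [nsmul_eq_mul] at h3
    linarith
  -- induction
  have main : ∀ t ≤ b, F T - F (S t) ≤ (1 - 1/(b:ℝ))^t * F T := by
    intro t
    induction t with
    | zero => intro _; simp [hS0, h0]
    | succ t ih =>
      intro ht
      have ht' : t < b := ht
      have ihh := ih (le_of_lt ht')
      have hs := step t ht'
      have hfac : (0:ℝ) ≤ 1 - 1/(b:ℝ) := by
        rw [sub_nonneg, div_le_one hbpos]; exact_mod_cast hb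
      have key : F T - F (S (t+1)) ≤ (1 - 1/(b:ℝ)) * (F T - F (S t)) := by
        have : (F T - F (S t)) / b ≤ F (S (t+1)) - F (S t) := by
          rw [div_le_iff₀ hbpos]; linarith [hs]
        have hb' : (1 - 1/(b:ℝ)) * (F T - F (S t)) = (F T - F (S t)) - (F T - F (S t))/b := by
          field_simp
        rw [hb']; linarith
      calc F T - F (S (t+1)) ≤ (1 - 1/(b:ℝ)) * (F T - F (S t)) := key
        _ ≤ (1 - 1/(b:ℝ)) * ((1 - 1/(b:ℝ))^t * F T) := mul_le_mul_of_nonneg_left ihh hfac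
        _ = (1 - 1/(b:ℝ))^(t+1) * F T := by ring
  have h1 : (1 - (1 - 1/(b:ℝ))^b) * F T ≤ F (S b) := by
    have := main b le_rfl; nlinarith
  refine ⟨h1, ?_⟩
  have hfac : (0:ℝ) ≤ 1 - 1/(b:ℝ) := by
    rw [sub_nonneg, div_le_one hbpos]; exact_mod_cast hb
  have hexp : (1 - 1/(b:ℝ))^b ≤ Real.exp (-1) := by
    have h1x : 1 - 1/(b:ℝ) ≤ Real.exp (-(1/(b:ℝ))) := by
      have := Real.add_one_le_exp (-(1/(b:ℝ))); linarith
    calc (1 - 1/(b:ℝ))^b ≤ (Real.exp (-(1/(b:ℝ))))^b := pow_le_pow_left₀ hfac h1x b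
      _ = Real.exp (-(1/(b:ℝ)) * b) := by rw [← Real.exp_nat_mul]; ring_nf
      _ = Real.exp (-1) := by congr 1; field_simp
  calc (1 - Real.exp (-1)) * F T ≤ (1 - (1 - 1/(b:ℝ))^b) * F T := by nlinarith
    _ ≤ F (S b) := h1
end
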